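/- Let T be a finite set of tile types, k ≥ 2, and let top, bot, left, right be sequences of k colors, and consider the square-reduction topologic graph G_sq with goal configuration c_goal = ((k+1,0),(k+1,1),…,(k+1,k+1)) for k+2 UAVs. If c_goal is reachable in G_sq with k+2 UAVs (by an execution of any length), then c_goal is reachable by an execution of length at most k+2. -/
import Mathlib


/-- A topologic graph: a finite set of regions with a base `B`, a move relation `→`
and a symmetric communication relation `⟷`, such that `B → B`. -/
structure TopGraph (V : Type) where
  base : V
  move : V → V → Prop
  comm : V → V → Prop
  comm_symm : ∀ v w : V, comm v w → comm w v
  base_move : move base base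

namespace TopGraph

variable {V : Type} {n : ℕ}

/-- The communication graph restricted to the occupied nodes together with the base is
connected: every occupied node is reachable from the base via communication edges whose
endpoints are occupied (or the base). -/
def ConnectedToBase (G : TopGraph V) (c : Fin n → V) : Prop :=
  ∀ i : Fin n,
    Relation.ReflTransGen
      (fun x y =>
        (x = G.base ∨ ∃ j, c j = x) ∧ (y = G.base ∨ ∃ j, c j = y) ∧ G.comm x y)
      G.base (c i)

/-- A configuration for `n` UAVs. -/
def IsConfig (G : TopGraph V) (c : Fin n → V) : Prop :=
  G.ConnectedToBase c ∧ ∀ i j : Fin n, i ≠ j → c i ≠ G.base → c i ≠ c j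

/-- An execution of length `ℓ` with `n` UAVs. -/
def IsExecution (G : TopGraph V) (n ℓ : ℕ) (d : ℕ → Fin n → V) : Prop :=
  (∀ t, t ≤ ℓ → G.IsConfig (d t)) ∧
  (∀ t, t < ℓ → ∀ i : Fin n, G.move (d t i) (d (t + 1) i))

/-- A covering execution: starts and ends with all UAVs at the base, and visits all nodes. -/
def IsCovering (G : TopGraph V) (n ℓ : ℕ) (d : ℕ → Fin n → V) : Prop :=
  G.IsExecution n ℓ d ∧
  (∀ i, d 0 i = G.base) ∧ (∀ i, d ℓ i = G.base) ∧
  (∀ v : V, ∃ t, t ≤ ℓ ∧ ∃ i, d t i = v)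

/-- A configuration is reachable if some execution from the all-base configuration ends in it. -/
def Reachable (G : TopGraph V) (c : Fin n → V) : Prop :=
  ∃ ℓ, ∃ d : ℕ → Fin n → V,
    G.IsExecution n ℓ d ∧ (∀ i, d 0 i = G.base) ∧ d ℓ = c

/-- Reachability by an execution of length at most `L`. -/
def ReachableIn (G : TopGraph V) (c : Fin n → V) (L : ℕ) : Prop :=
  ∃ ℓ, ℓ ≤ L ∧ ∃ d : ℕ → Fin n → V,
    G.IsExecution n ℓ d ∧ (∀ i, d 0 i = G.base) ∧ d ℓ = c

/-- Neighbor-communicable: if a UAV can move from `v` to `v'`, then `v` and `v'` can communicate. -/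
def NeighborCommunicable (G : TopGraph V) : Prop :=
  ∀ v w : V, G.move v w → G.comm v w

end TopGraph
/-- A tile type: four colors (naturals). -/
structure Tile where
  left : ℕ
  up : ℕ
  right : ℕ
  down : ℕ
deriving DecidableEq

/-- The color white. -/
def white : ℕ := 0
/-! The square-reduction topologic graph. Tile nodes `(t, i)` have column `i+1 ∈ {1,…,k}`
encoded by `i : Fin k`. Boundary nodes are pairs `(row, column) ∈ {0,…,k+1}²` with row or
column in `{0, k+1}`, encoded as a subtype of `Fin (k+2) × Fin (k+2)`. The base is `none`. -/

/-- Boundary nodes `Bd` of the square-reduction graph. -/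
abbrev SqBd (k : ℕ) : Type :=
  {p : Fin (k + 2) × Fin (k + 2) //
    p.1.val = 0 ∨ p.1.val = k + 1 ∨ p.2.val = 0 ∨ p.2.val = k + 1}

/-- Non-base nodes of the square-reduction graph. -/
abbrev SqInner (T : Finset Tile) (k : ℕ) : Type := ({t : Tile // t ∈ T} × Fin k) ⊕ SqBd k

/-- Nodes of the square-reduction graph (`none` is the base). -/
abbrev SqNode (T : Finset Tile) (k : ℕ) : Type := Option (SqInner T k)

/-- Moves of the square-reduction graph. -/
def sqMove (T : Finset Tile) (k : ℕ) (top bot : Fin k → ℕ) :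
    SqNode T k → SqNode T k → Prop := fun x y =>
  (x = none ∧ y = none) ∨
  (x = none ∧ ∃ b : SqBd k, y = some (Sum.inr b) ∧ b.val.1.val = 0) ∨
  (∃ q q' : {t : Tile // t ∈ T} × Fin k, x = some (Sum.inl q) ∧ y = some (Sum.inl q') ∧
    q.2 = q'.2 ∧ q.1.val.up = q'.1.val.down) ∨
  (∃ (b : SqBd k) (q : {t : Tile // t ∈ T} × Fin k), x = some (Sum.inr b) ∧
    y = some (Sum.inl q) ∧ b.val.1.val = 0 ∧ b.val.2.val = q.2.val + 1 ∧
    q.1.val.down = bot q.2) ∨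
  (∃ (q : {t : Tile // t ∈ T} × Fin k) (b : SqBd k), x = some (Sum.inl q) ∧
    y = some (Sum.inr b) ∧ b.val.1.val = k + 1 ∧ b.val.2.val = q.2.val + 1 ∧
    q.1.val.up = top q.2) ∨
  (∃ b b' : SqBd k, x = some (Sum.inr b) ∧ y = some (Sum.inr b') ∧
    b'.val.1.val = b.val.1.val + 1 ∧ b.val.2 = b'.val.2 ∧
    (b.val.2.val = 0 ∨ b.val.2.val = k + 1))

/-- One direction of the communications of the square-reduction graph. -/
def sqComm0 (T : Finset Tile) (k : ℕ) (lef rig : Fin k → ℕ) :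
    SqNode T k → SqNode T k → Prop := fun x y =>
  (x = none ∧ ∃ b : SqBd k, y = some (Sum.inr b) ∧ b.val.2.val = 0) ∨
  (∃ q q' : {t : Tile // t ∈ T} × Fin k, x = some (Sum.inl q) ∧ y = some (Sum.inl q') ∧
    q'.2.val = q.2.val + 1 ∧ q.1.val.right = q'.1.val.left) ∨
  (∃ b b' : SqBd k, x = some (Sum.inr b) ∧ y = some (Sum.inr b') ∧
    b.val.1 = b'.val.1 ∧ (b.val.1.val = 0 ∨ b.val.1.val = k + 1) ∧
    b'.val.2.val = b.val.2.val + 1) ∨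
  (∃ (b : SqBd k) (q : {t : Tile // t ∈ T} × Fin k) (jf : Fin k),
    x = some (Sum.inr b) ∧ y = some (Sum.inl q) ∧
    b.val.2.val = 0 ∧ b.val.1.val = jf.val + 1 ∧ q.2.val = 0 ∧ q.1.val.left = lef jf) ∨
  (∃ (b : SqBd k) (q : {t : Tile // t ∈ T} × Fin k) (jf : Fin k),
    x = some (Sum.inr b) ∧ y = some (Sum.inl q) ∧
    b.val.2.val = k + 1 ∧ b.val.1.val = jf.val + 1 ∧ q.2.val = k - 1 ∧ q.1.val.right = rig jf)

/-- The square-reduction topologic graph `G_sq`. -/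
def sqGraph (T : Finset Tile) (k : ℕ) (top bot lef rig : Fin k → ℕ) :
    TopGraph (SqNode T k) where
  base := none
  move := sqMove T k top bot
  comm := fun x y => sqComm0 T k lef rig x y ∨ sqComm0 T k lef rig y x
  comm_symm := fun _ _ h => h.symm
  base_move := Or.inl ⟨rfl, rfl⟩

/-- The goal configuration `((k+1,0), (k+1,1), …, (k+1,k+1))` for `k+2` UAVs. -/
def sqGoal (T : Finset Tile) (k : ℕ) : Fin (k + 2) → SqNode T k :=
  fun j => some (Sum.inr ⟨(⟨k + 1, by omega⟩, j), Or.inr (Or.inl rfl)⟩)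

/-- A square tiling of the `k × k` square (row `i+1` encoded by `i : Fin k`, bottom row
first; column `j+1` encoded by `j : Fin k`). -/
def IsSquareTiling (T : Finset Tile) (k : ℕ) (top bot lef rig : Fin k → ℕ)
    (lam : Fin k → Fin k → Tile) : Prop :=
  (∀ (i j : Fin k), lam i j ∈ T) ∧
  (∀ (i : Fin k) (j j' : Fin k), j'.val = j.val + 1 → (lam i j).right = (lam i j').left) ∧
  (∀ (i i' : Fin k) (j : Fin k), i'.val = i.val + 1 → (lam i j).up = (lam i' j).down) ∧
  (∀ (i j : Fin k), i.val = 0 → (lam i j).down = bot j) ∧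
  (∀ (i j : Fin k), i.val = k - 1 → (lam i j).up = top j) ∧
  (∀ (i j : Fin k), j.val = 0 → (lam i j).left = lef i) ∧
  (∀ (i j : Fin k), j.val = k - 1 → (lam i j).right = rig i)
/-- if the goal configuration is reachable in the square-reduction graph
with `k+2` UAVs, then it is reachable by an execution of length at most `k+2`. -/
theorem square_reachable_implies_bounded (T : Finset Tile) (k : ℕ) (hk : 2 ≤ k)
    (top bot lef rig : Fin k → ℕ)
    (h : (sqGraph T k top bot lef rig).Reachable (sqGoal T k)) :
    (sqGraph T k top bot lef rig).ReachableIn (sqGoal T k) (k + 2) := by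
  obtain ⟨ℓ, d, hexec, h0, hend⟩ := h
  by_cases hle : ℓ ≤ k + 2
  · exact ⟨ℓ, hle, d, hexec, h0, hend⟩
  push_neg at hle
  set s := ℓ - (k + 2) with hsdef
  have hsl : s + (k + 2) = ℓ := by omega
  -- Lemma 1: a UAV on a column-0 boundary node is forced up the corridor,
  -- so it can have at most k+1-row steps remaining.
  have corridor : ∀ m t (i : Fin (k + 2)) (b : SqBd k), t + m = ℓ →
      d t i = some (Sum.inr b) → b.val.2.val = 0 → m + b.val.1.val ≤ k + 1 := by
    intro m
    induction m with
    | zero =>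
      intro t i b _ _ _
      have := b.val.1.isLt
      omega
    | succ m ih =>
      intro t i b htm hd hcol
      have hmove : sqMove T k top bot (d t i) (d (t + 1) i) := hexec.2 t (by omega) i
      unfold sqMove at hmove
      rcases hmove with ⟨hx, _⟩ | ⟨hx, _⟩ | ⟨q, q', hx, _⟩ |
        ⟨b0, q, hx, hy, hrow0, hcoleq, _⟩ | ⟨q, b', hx, _⟩ |
        ⟨b0, b', hx, hy, hrow, hcoleq, _⟩
      · rw [hd] at hx; simp at hx
      · rw [hd] at hx; simp at hx
      · rw [hd] at hx; simp at hx
      · rw [hd] at hx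
        have hb : b = b0 := by simpa using hx
        rw [← hb] at hcoleq
        omega
      · rw [hd] at hx; simp at hx
      · rw [hd] at hx
        have hb : b = b0 := by simpa using hx
        subst hb
        have hcol' : b'.val.2.val = 0 := by rw [← hcoleq]; exact hcol
        have := ih (t + 1) i b' (by omega) hy hcol'
        omega
  have hnocorr : ∀ (i : Fin (k + 2)) (b : SqBd k),
      d s i = some (Sum.inr b) → b.val.2.val ≠ 0 := by
    intro i b hd hcol
    have := corridor (k + 2) s i b hsl hd hcol
    omega
  -- Lemma 2: at time s every UAV is at the base.
  have hallbase : ∀ i, d s i = none := by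
    have hconf := (hexec.1 s (by omega)).1
    intro i
    have hreach := hconf i
    have key : ∀ v : SqNode T k,
        Relation.ReflTransGen
          (fun x y =>
            (x = (sqGraph T k top bot lef rig).base ∨ ∃ j, d s j = x) ∧
            (y = (sqGraph T k top bot lef rig).base ∨ ∃ j, d s j = y) ∧
            (sqGraph T k top bot lef rig).comm x y)
          (sqGraph T k top bot lef rig).base v → v = none := by
      intro v hv
      induction hv with
      | refl => rfl
      | @tail w c hw hstep ih =>
        obtain ⟨_, hocc, hcomm⟩ := hstep
        rw [ih] at hcomm
        exfalso
        have hbase : (sqGraph T k top bot lef rig).base = (none : SqNode T k) := rfl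
        rcases hcomm with hc | hc
        · unfold sqComm0 at hc
          rcases hc with ⟨_, b, hcb, hcol⟩ | ⟨q, q', hx, _⟩ | ⟨b, b', hx, _⟩ |
            ⟨b, q, jf, hx, _⟩ | ⟨b, q, jf, hx, _⟩
          · rcases hocc with hc0 | ⟨j, hj⟩
            · rw [hbase] at hc0; rw [hc0] at hcb; simp at hcb
            · rw [hcb] at hj; exact hnocorr j b hj hcol
          · simp at hx
          · simp at hx
          · simp at hx
          · simp at hx
        · unfold sqComm0 at hc
          rcases hc with ⟨_, b, hcb, _⟩ | ⟨q, q', _, hy, _⟩ | ⟨b, b', _, hy, _⟩ |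
            ⟨b, q, jf, _, hy, _⟩ | ⟨b, q, jf, _, hy, _⟩
          · simp at hcb
          · simp at hy
          · simp at hy
          · simp at hy
          · simp at hy
    exact key _ hreach
  refine ⟨k + 2, le_refl _, fun t => d (s + t), ⟨fun t ht => hexec.1 (s + t) (by omega),
    fun t ht i => ?_⟩, fun i => ?_, ?_⟩
  · exact hexec.2 (s + t) (by omega) i
  · exact hallbase i
  · show d (s + (k + 2)) = sqGoal T k
    rw [hsl]; exact hend
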